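/- Uniform iteration bound: let 0 < χ < 1, P ≥ 1, P₁ ≥ 0, P₂ ≥ 0 be real numbers, and let (a_m)_{m≥0} be a sequence of nonnegative real numbers satisfying a_{m+1} ≤ (P·χ^{−2m})^{χ^m} · a_m + P₁·P₂^{χ^m} for every m ≥ 0. Then for every N ≥ 1, a_N ≤ P^{1/(1−χ)} · χ^{−2χ/(1−χ)²} · ( a_0 + P₁ · ∑_{i=0}^{N−1} P₂^{χ^i} ). -/
import Mathlib


/-- The effective form of the iteration lemma (Lemma 3.4 of the paper): if
`0 < χ < 1`, `P ≥ 1`, `P₁, P₂ ≥ 0` and the nonnegative sequence `a` satisfies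
`a_{m+1} ≤ (P χ^{-2m})^{χ^m} a_m + P₁ P₂^{χ^m}` for all `m`, then for `N ≥ 1`,
`a_N ≤ P^{1/(1-χ)} χ^{-2χ/(1-χ)²} (a_0 + P₁ ∑_{i=0}^{N-1} P₂^{χ^i})`. -/
theorem moser_iteration_uniform_bound (χ P P₁ P₂ : ℝ)
    (hχ0 : 0 < χ) (hχ1 : χ < 1)
    (hP : 1 ≤ P) (hP₁ : 0 ≤ P₁) (hP₂ : 0 ≤ P₂)
    (a : ℕ → ℝ) (ha : ∀ m, 0 ≤ a m)
    (hrec : ∀ m : ℕ,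
      a (m + 1) ≤ (P * (χ ^ (2 * m))⁻¹) ^ (χ ^ m) * a m + P₁ * P₂ ^ (χ ^ m))
    (N : ℕ) (hN : 1 ≤ N) :
    a N ≤ P ^ (1 / (1 - χ)) * χ ^ (-(2 * χ / (1 - χ) ^ 2)) *
      (a 0 + P₁ * ∑ i ∈ Finset.range N, P₂ ^ (χ ^ i)) := by
  have hP0 : (0:ℝ) < P := lt_of_lt_of_le one_pos hP
  have h1χ : (0:ℝ) < 1 - χ := by linarith
  set T : ℕ → ℝ := fun n => ∑ m ∈ Finset.range n, χ ^ m with hTdef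
  set U : ℕ → ℝ := fun n => ∑ m ∈ Finset.range n, (2 * m : ℝ) * χ ^ m with hUdef
  have hT0 : ∀ n, 0 ≤ T n := by
    intro n; apply Finset.sum_nonneg; intro i _; positivity
  have hU0 : ∀ n, 0 ≤ U n := by
    intro n; apply Finset.sum_nonneg; intro i _; positivity
  have hg1 : ∀ n, 1 ≤ P ^ (T n) * χ ^ (-(U n)) := by
    intro n
    have h1 : 1 ≤ P ^ (T n) := Real.one_le_rpow hP (hT0 n)
    have h2 : (1:ℝ) ≤ χ ^ (-(U n)) := by
      have := Real.rpow_le_rpow_of_exponent_ge hχ0 hχ1.le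
        (by linarith [hU0 n] : -(U n) ≤ 0)
      simpa using this
    calc (1:ℝ) = 1 * 1 := by ring
    _ ≤ P ^ (T n) * χ ^ (-(U n)) := by
        apply mul_le_mul h1 h2 one_pos.le (by positivity)
  have key : ∀ n, a n ≤ P ^ (T n) * χ ^ (-(U n)) *
      (a 0 + P₁ * ∑ i ∈ Finset.range n, P₂ ^ (χ ^ i)) := by
    intro n
    induction n with
    | zero => simp [hTdef, hUdef]
    | succ n ih =>
      have hfn : (P * (χ ^ (2 * n))⁻¹) ^ (χ ^ n)
          = P ^ (χ ^ n) * χ ^ (-((2 * n : ℝ) * χ ^ n)) := by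
        rw [Real.mul_rpow hP0.le (by positivity),
          ← Real.rpow_natCast χ (2 * n), ← Real.rpow_neg hχ0.le,
          ← Real.rpow_mul hχ0.le]
        push_cast
        ring_nf
      have hTs : T (n + 1) = T n + χ ^ n := by
        simp [hTdef, Finset.sum_range_succ]
      have hUs : U (n + 1) = U n + (2 * n : ℝ) * χ ^ n := by
        simp [hUdef, Finset.sum_range_succ]
      have hgs : P ^ (T (n+1)) * χ ^ (-(U (n+1)))
          = (P ^ (T n) * χ ^ (-(U n))) * (P * (χ ^ (2 * n))⁻¹) ^ (χ ^ n) := by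
        rw [hfn, hTs, hUs, Real.rpow_add hP0, neg_add, Real.rpow_add hχ0]
        ring
      have hf0 : 0 ≤ (P * (χ ^ (2 * n))⁻¹) ^ (χ ^ n) := by positivity
      have hbr : 0 ≤ a 0 + P₁ * ∑ i ∈ Finset.range n, P₂ ^ (χ ^ i) := by
        have : 0 ≤ ∑ i ∈ Finset.range n, P₂ ^ (χ ^ i) := by
          apply Finset.sum_nonneg; intro i _; positivity
        have := ha 0; positivity
      calc a (n + 1)
          ≤ (P * (χ ^ (2 * n))⁻¹) ^ (χ ^ n) * a n + P₁ * P₂ ^ (χ ^ n) := hrec n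
        _ ≤ (P * (χ ^ (2 * n))⁻¹) ^ (χ ^ n) *
              (P ^ (T n) * χ ^ (-(U n)) *
                (a 0 + P₁ * ∑ i ∈ Finset.range n, P₂ ^ (χ ^ i)))
              + P₁ * P₂ ^ (χ ^ n) := by
            gcongr
        _ = P ^ (T (n+1)) * χ ^ (-(U (n+1))) *
              (a 0 + P₁ * ∑ i ∈ Finset.range n, P₂ ^ (χ ^ i))
              + P₁ * P₂ ^ (χ ^ n) := by rw [hgs]; ring
        _ ≤ P ^ (T (n+1)) * χ ^ (-(U (n+1))) *
              (a 0 + P₁ * ∑ i ∈ Finset.range n, P₂ ^ (χ ^ i))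
              + P ^ (T (n+1)) * χ ^ (-(U (n+1))) * (P₁ * P₂ ^ (χ ^ n)) := by
            have h2 : 0 ≤ P₁ * P₂ ^ (χ ^ n) := by positivity
            nlinarith [hg1 (n+1)]
        _ = P ^ (T (n+1)) * χ ^ (-(U (n+1))) *
              (a 0 + P₁ * ∑ i ∈ Finset.range (n+1), P₂ ^ (χ ^ i)) := by
            rw [Finset.sum_range_succ]; ring
  -- bound the partial sums
  have hTle : T N ≤ 1 / (1 - χ) := by
    have hsum : Summable fun m : ℕ => χ ^ m :=
      summable_geometric_of_lt_one hχ0.le hχ1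
    have := Summable.sum_le_tsum (Finset.range N) (fun i _ => by positivity) hsum
    rw [tsum_geometric_of_lt_one hχ0.le hχ1] at this
    simpa [hTdef, one_div] using this
  have hUle : U N ≤ 2 * χ / (1 - χ) ^ 2 := by
    have hnorm : ‖χ‖ < 1 := by rw [Real.norm_eq_abs, abs_of_pos hχ0]; exact hχ1
    have hsum : Summable fun m : ℕ => (m : ℝ) * χ ^ m := by
      simpa using (hasSum_coe_mul_geometric_of_norm_lt_one hnorm).summable
    have h := Summable.sum_le_tsum (Finset.range N)
      (fun i _ => by positivity : ∀ i ∉ Finset.range N, 0 ≤ (i : ℝ) * χ ^ i) hsum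
    rw [tsum_coe_mul_geometric_of_norm_lt_one hnorm] at h
    have : U N = 2 * ∑ m ∈ Finset.range N, (m : ℝ) * χ ^ m := by
      rw [hUdef, Finset.mul_sum]
      exact Finset.sum_congr rfl fun m _ => by ring
    rw [this]
    calc 2 * ∑ m ∈ Finset.range N, (m : ℝ) * χ ^ m ≤ 2 * (χ / (1 - χ) ^ 2) := by linarith
      _ = 2 * χ / (1 - χ) ^ 2 := by ring
  have hgN : P ^ (T N) * χ ^ (-(U N)) ≤
      P ^ (1 / (1 - χ)) * χ ^ (-(2 * χ / (1 - χ) ^ 2)) := by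
    have h1 : P ^ (T N) ≤ P ^ (1 / (1 - χ)) :=
      Real.rpow_le_rpow_of_exponent_le hP hTle
    have h2 : χ ^ (-(U N)) ≤ χ ^ (-(2 * χ / (1 - χ) ^ 2)) :=
      Real.rpow_le_rpow_of_exponent_ge hχ0 hχ1.le (neg_le_neg hUle)
    exact mul_le_mul h1 h2 (by positivity) (by positivity)
  have hbrN : 0 ≤ a 0 + P₁ * ∑ i ∈ Finset.range N, P₂ ^ (χ ^ i) := by
    have : 0 ≤ ∑ i ∈ Finset.range N, P₂ ^ (χ ^ i) := by
      apply Finset.sum_nonneg; intro i _; positivity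
    have := ha 0; positivity
  calc a N ≤ P ^ (T N) * χ ^ (-(U N)) *
        (a 0 + P₁ * ∑ i ∈ Finset.range N, P₂ ^ (χ ^ i)) := key N
    _ ≤ P ^ (1 / (1 - χ)) * χ ^ (-(2 * χ / (1 - χ) ^ 2)) *
        (a 0 + P₁ * ∑ i ∈ Finset.range N, P₂ ^ (χ ^ i)) := by
      exact mul_le_mul_of_nonneg_right hgN hbrN
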